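/- arXiv:2102.12643 — 6 statements merged into one kernel-verified Lean document; each statement's English description precedes it below -/
import Mathlib

section
/- Let D ⊆ ℝ^d be a convex set and let G : ℝ^d → ℝ^n be differentiable on D with derivative (Jacobian) DG. Suppose there are constants 0 < ι ≤ κ and M ≥ 0 such that for all z, z' ∈ D: (i) ι‖z − z'‖ ≤ ‖G(z) − G(z')‖ ≤ κ‖z − z'‖, and (ii) ‖DG(z) − DG(z')‖ ≤ M‖z − z'‖ in operator norm. Then for all z, z' ∈ D, the inner product ⟨G(z) − G(z'), DG(z)(z − z')⟩ ≥ ι²‖z − z'‖² − (κM/2)‖z − z'‖³. Consequently, if D has diameter at most Δ, then ⟨G(z) − G(z'), DG(z)(z − z')⟩ ≥ (ι² − κMΔ/2)‖z − z'‖² for all z, z' ∈ D. -/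
open scoped RealInnerProductSpace

/-!
Integrating the Lipschitz bound on the derivative along the segment from `z` to `z'` bounds the
first-order Taylor remainder `r = G z' - G z - DG z (z' - z)` by `M/2 ‖z - z'‖²`. Since
`DG z (z - z') = (G z - G z') + r`, Cauchy–Schwarz gives
`⟪G z - G z', DG z (z - z')⟫ ≥ ‖G z - G z'‖² - ‖G z - G z'‖ ‖r‖`, and the near-isometry bounds
`ι ‖z - z'‖ ≤ ‖G z - G z'‖ ≤ κ ‖z - z'‖` finish the estimate.
-/

open Set

section

variable {E F : Type*} [NormedAddCommGroup E] [NormedSpace ℝ E] [NormedAddCommGroup F]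

theorem norm_image_one_sub_image_zero_le_of_norm_deriv_le_mul [NormedSpace ℝ F]
    {g g' : ℝ → F} {C : ℝ}
    (hg : ∀ t ∈ Icc (0 : ℝ) 1, HasDerivWithinAt g (g' t) (Icc 0 1) t)
    (hg' : ∀ t ∈ Ico (0 : ℝ) 1, ‖g' t‖ ≤ C * t) :
    ‖g 1 - g 0‖ ≤ C / 2 := by
  have hB (t : ℝ) : HasDerivAt (fun t ↦ C / 2 * t ^ 2) (C * t) t := by
    refine ((hasDerivAt_pow 2 t).const_mul (C / 2)).congr_deriv ?_
    norm_num
    ring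
  have key := image_norm_le_of_norm_deriv_right_le_deriv_boundary (f := fun t ↦ g t - g 0)
    (fun t ht ↦ (hg t ht).continuousWithinAt.sub continuousWithinAt_const)
    (fun t ht ↦ ((hg t (Ico_subset_Icc_self ht)).sub_const (g 0)).mono_of_mem_nhdsWithin
      (Icc_mem_nhdsGE_of_mem ht))
    (by simp) hB hg' (right_mem_Icc.2 zero_le_one)
  simpa using key

theorem Convex.norm_image_sub_sub_fderiv_le_of_lipschitz [NormedSpace ℝ F] {s : Set E}
    (hs : Convex ℝ s) {f : E → F} {f' : E → E →L[ℝ] F} {M : ℝ} {x y : E}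
    (hf : ∀ z ∈ s, HasFDerivWithinAt f (f' z) s z)
    (hf' : ∀ z ∈ s, ‖f' z - f' x‖ ≤ M * ‖z - x‖) (hx : x ∈ s) (hy : y ∈ s) :
    ‖f y - f x - f' x (y - x)‖ ≤ M / 2 * ‖y - x‖ ^ 2 := by
  set v := y - x
  let c : ℝ → E := fun t ↦ x + t • v
  have hc : MapsTo c (Icc 0 1) s := fun t ht ↦ hs.add_smul_sub_mem hx hy ht
  have hcv (t : ℝ) : HasDerivAt c v t := by
    simpa [c] using ((hasDerivAt_id t).smul_const v).const_add x
  have hderiv : ∀ t ∈ Icc (0 : ℝ) 1, HasDerivWithinAt (fun t ↦ f (c t) - t • f' x v)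
      (f' (c t) v - f' x v) (Icc 0 1) t := fun t ht ↦
    ((hf (c t) (hc ht)).comp_hasDerivWithinAt t (hcv t).hasDerivWithinAt hc).sub
      (by simpa using ((hasDerivAt_id t).smul_const (f' x v)).hasDerivWithinAt)
  have hbound : ∀ t ∈ Ico (0 : ℝ) 1, ‖f' (c t) v - f' x v‖ ≤ M * ‖v‖ ^ 2 * t := by
    intro t ht
    have hct : ‖c t - x‖ = t * ‖v‖ := by simp [c, norm_smul, abs_of_nonneg ht.1]
    calc ‖f' (c t) v - f' x v‖ ≤ ‖f' (c t) - f' x‖ * ‖v‖ := (f' (c t) - f' x).le_opNorm v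
      _ ≤ M * ‖c t - x‖ * ‖v‖ := by
        gcongr
        exact hf' (c t) (hc (Ico_subset_Icc_self ht))
      _ = M * ‖v‖ ^ 2 * t := by rw [hct]; ring
  have := norm_image_one_sub_image_zero_le_of_norm_deriv_le_mul hderiv hbound
  simp only [c, v, one_smul, zero_smul, add_zero, add_sub_cancel] at this
  convert this using 2
  · abel
  · ring

theorem inner_image_sub_fderiv_ge_of_lipschitz [InnerProductSpace ℝ F]
    {s : Set E} (hs : Convex ℝ s) {f : E → F} {f' : E → E →L[ℝ] F} {ι κ M : ℝ} {x y : E}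
    (hι : 0 ≤ ι) (hf : ∀ z ∈ s, HasFDerivWithinAt f (f' z) s z)
    (hf' : ∀ z ∈ s, ‖f' z - f' x‖ ≤ M * ‖z - x‖)
    (hlow : ι * ‖x - y‖ ≤ ‖f x - f y‖) (hup : ‖f x - f y‖ ≤ κ * ‖x - y‖)
    (hx : x ∈ s) (hy : y ∈ s) :
    ι ^ 2 * ‖x - y‖ ^ 2 - κ * M / 2 * ‖x - y‖ ^ 3 ≤ ⟪f x - f y, f' x (x - y)⟫ := by
  set u := f x - f y
  set r := f y - f x - f' x (y - x)
  have hr : ‖r‖ ≤ M / 2 * ‖x - y‖ ^ 2 := by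
    simpa only [norm_sub_rev y x] using hs.norm_image_sub_sub_fderiv_le_of_lipschitz hf hf' hx hy
  have hfx : f' x (x - y) = u + r := by
    rw [← neg_sub y x, map_neg]
    simp only [u, r]
    abel
  have hu : (ι * ‖x - y‖) ^ 2 ≤ ‖u‖ ^ 2 := by gcongr
  have hur : ‖u‖ * ‖r‖ ≤ κ * ‖x - y‖ * (M / 2 * ‖x - y‖ ^ 2) :=
    mul_le_mul hup hr (norm_nonneg r) ((norm_nonneg u).trans hup)
  calc ι ^ 2 * ‖x - y‖ ^ 2 - κ * M / 2 * ‖x - y‖ ^ 3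
      = (ι * ‖x - y‖) ^ 2 - κ * ‖x - y‖ * (M / 2 * ‖x - y‖ ^ 2) := by ring
    _ ≤ ‖u‖ ^ 2 - ‖u‖ * ‖r‖ := by linarith
    _ ≤ ‖u‖ ^ 2 + ⟪u, r⟫ := by linarith [neg_abs_le ⟪u, r⟫, abs_real_inner_le_norm u r]
    _ = ⟪u, f' x (x - y)⟫ := by rw [hfx, inner_add_right, real_inner_self_eq_norm_sq]

end

/-- Strong smoothness of a near-isometric generator with Lipschitz Jacobian. -/
theorem strong_smoothness_of_near_isometry
    {d n : ℕ} (D : Set (EuclideanSpace ℝ (Fin d))) (hD : Convex ℝ D)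
    (G : EuclideanSpace ℝ (Fin d) → EuclideanSpace ℝ (Fin n))
    (DG : EuclideanSpace ℝ (Fin d) →
      (EuclideanSpace ℝ (Fin d) →L[ℝ] EuclideanSpace ℝ (Fin n)))
    (hdiff : ∀ z ∈ D, HasFDerivWithinAt G (DG z) D z)
    (ι κ M : ℝ) (hι : 0 < ι) (hικ : ι ≤ κ) (hM : 0 ≤ M)
    (hiso : ∀ z ∈ D, ∀ z' ∈ D,
      ι * ‖z - z'‖ ≤ ‖G z - G z'‖ ∧ ‖G z - G z'‖ ≤ κ * ‖z - z'‖)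
    (hlipJ : ∀ z ∈ D, ∀ z' ∈ D, ‖DG z - DG z'‖ ≤ M * ‖z - z'‖) :
    (∀ z ∈ D, ∀ z' ∈ D,
      ⟪G z - G z', DG z (z - z')⟫ ≥
        ι ^ 2 * ‖z - z'‖ ^ 2 - (κ * M / 2) * ‖z - z'‖ ^ 3) ∧
    (∀ Δ : ℝ, (∀ x ∈ D, ∀ y ∈ D, ‖x - y‖ ≤ Δ) →
      ∀ z ∈ D, ∀ z' ∈ D,
        ⟪G z - G z', DG z (z - z')⟫ ≥
          (ι ^ 2 - κ * M * Δ / 2) * ‖z - z'‖ ^ 2) := by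
  have cubic : ∀ z ∈ D, ∀ z' ∈ D, ⟪G z - G z', DG z (z - z')⟫ ≥
      ι ^ 2 * ‖z - z'‖ ^ 2 - (κ * M / 2) * ‖z - z'‖ ^ 3 := fun z hz z' hz' ↦
    inner_image_sub_fderiv_ge_of_lipschitz hD hι.le hdiff (fun w hw ↦ hlipJ w hw z hz)
      (hiso z hz z' hz').1 (hiso z hz z' hz').2 hz hz'
  refine ⟨cubic, fun Δ hΔ z hz z' hz' ↦ ?_⟩
  have hκM : 0 ≤ κ * M / 2 := by have hκ : 0 ≤ κ := hι.le.trans hικ; positivity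
  have hcube : κ * M / 2 * ‖z - z'‖ ^ 3 ≤ κ * M / 2 * ‖z - z'‖ ^ 2 * Δ :=
    calc κ * M / 2 * ‖z - z'‖ ^ 3 = κ * M / 2 * ‖z - z'‖ ^ 2 * ‖z - z'‖ := by ring
      _ ≤ κ * M / 2 * ‖z - z'‖ ^ 2 * Δ := by gcongr; exact hΔ z hz z' hz'
  linarith [cubic z hz z' hz']
end

section
/- Let G : ℝ^d → ℝ^n be differentiable with derivative DG, let A : ℝ^n → ℝ^m be a linear map, let z* ∈ ℝ^d, and define F(z) = ‖A G(z*) − A G(z)‖². Suppose there are constants B, κ, M > 0 such that for all z, z' ∈ ℝ^d: ‖G(z)‖ ≤ B, ‖G(z) − G(z')‖ ≤ κ‖z − z'‖, ‖DG(z)‖ ≤ κ, and ‖DG(z) − DG(z')‖ ≤ M‖z − z'‖ (operator norms). Then for all z, z' ∈ ℝ^d, ‖∇F(z) − ∇F(z')‖ ≤ 2(2MB + κ²)‖AᵀA‖·‖z − z'‖; i.e., F is L-smooth with L = 2(2MB + κ²)‖AᵀA‖. -/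
open scoped RealInnerProductSpace

set_option maxHeartbeats 1600000 in
/-- Smoothness of the compressed-sensing loss: the gradient of
`F(z) = ‖A G(z*) − A G(z)‖²` is `L`-Lipschitz with `L = 2(2MB + κ²)‖AᵀA‖`. -/
theorem gradient_lipschitz_cs_loss
    {d n m : ℕ}
    (G : EuclideanSpace ℝ (Fin d) → EuclideanSpace ℝ (Fin n))
    (DG : EuclideanSpace ℝ (Fin d) →
      (EuclideanSpace ℝ (Fin d) →L[ℝ] EuclideanSpace ℝ (Fin n)))
    (hdiff : ∀ z, HasFDerivAt G (DG z) z)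
    (A : EuclideanSpace ℝ (Fin n) →L[ℝ] EuclideanSpace ℝ (Fin m))
    (zstar : EuclideanSpace ℝ (Fin d))
    (B κ M : ℝ) (hB : 0 < B) (hκ : 0 < κ) (hM : 0 < M)
    (hbdG : ∀ z : EuclideanSpace ℝ (Fin d), ‖G z‖ ≤ B)
    (hlipG : ∀ z z' : EuclideanSpace ℝ (Fin d), ‖G z - G z'‖ ≤ κ * ‖z - z'‖)
    (hDG : ∀ z : EuclideanSpace ℝ (Fin d), ‖DG z‖ ≤ κ)
    (hlipDG : ∀ z z' : EuclideanSpace ℝ (Fin d), ‖DG z - DG z'‖ ≤ M * ‖z - z'‖)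
    (F : EuclideanSpace ℝ (Fin d) → ℝ)
    (hF : ∀ w, F w = ‖A (G zstar) - A (G w)‖ ^ 2) :
    ∀ z z' : EuclideanSpace ℝ (Fin d),
      ‖gradient F z - gradient F z'‖ ≤
        2 * (2 * M * B + κ ^ 2) * ‖(ContinuousLinearMap.adjoint A).comp A‖ *
          ‖z - z'‖ := by
  intro z z'
  set T := (ContinuousLinearMap.adjoint A).comp A with hTdef
  -- gradient formula
  have hgrad : ∀ w, gradient F w =
      (-2 : ℝ) • (ContinuousLinearMap.adjoint (DG w)) (T (G zstar - G w)) := by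
    intro w
    have h1 : HasFDerivAt (fun u => A (G zstar) - A (G u)) (-(A.comp (DG w))) w :=
      ((A.hasFDerivAt.comp w (hdiff w)).const_sub _)
    have h2 := h1.norm_sq
    have heq : (InnerProductSpace.toDual ℝ _ ((-2:ℝ) •
          (ContinuousLinearMap.adjoint (DG w)) (T (G zstar - G w))))
        = 2 • (innerSL ℝ (A (G zstar) - A (G w))).comp (-(A.comp (DG w))) := by
      ext h
      simp [hTdef, InnerProductSpace.toDual_apply_apply, real_inner_smul_left,
        ContinuousLinearMap.adjoint_inner_left, inner_sub_left, map_sub, two_smul,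
        inner_neg_right]
    have h3 : HasGradientAt F
        ((-2:ℝ) • (ContinuousLinearMap.adjoint (DG w)) (T (G zstar - G w))) w := by
      rw [hasGradientAt_iff_hasFDerivAt, heq]
      have hFe : F = fun u => ‖A (G zstar) - A (G u)‖ ^ 2 := funext hF
      rw [hFe]
      exact h2
    exact h3.gradient
  rw [hgrad z, hgrad z']
  set u := G zstar
  have hT0 : (0:ℝ) ≤ ‖T‖ := norm_nonneg _
  have key : (ContinuousLinearMap.adjoint (DG z)) (T (u - G z)) -
      (ContinuousLinearMap.adjoint (DG z')) (T (u - G z')) =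
      (ContinuousLinearMap.adjoint (DG z) - ContinuousLinearMap.adjoint (DG z'))
        (T (u - G z)) +
      (ContinuousLinearMap.adjoint (DG z')) (T (G z' - G z)) := by
    simp only [ContinuousLinearMap.sub_apply, map_sub]
    abel
  have b1 : ‖(ContinuousLinearMap.adjoint (DG z) - ContinuousLinearMap.adjoint (DG z'))
      (T (u - G z))‖ ≤ (M * ‖z - z'‖) * (‖T‖ * (2 * B)) := by
    refine (ContinuousLinearMap.le_opNorm _ _).trans ?_
    have e1 : ‖ContinuousLinearMap.adjoint (DG z) -
        ContinuousLinearMap.adjoint (DG z')‖ = ‖DG z - DG z'‖ := by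
      rw [← map_sub (ContinuousLinearMap.adjoint :
        (EuclideanSpace ℝ (Fin d) →L[ℝ] EuclideanSpace ℝ (Fin n)) ≃ₗᵢ[ℝ] _)]
      exact LinearIsometryEquiv.norm_map _ _
    have e2 : ‖T (u - G z)‖ ≤ ‖T‖ * (2 * B) := by
      refine (ContinuousLinearMap.le_opNorm _ _).trans ?_
      have h3 : ‖u - G z‖ ≤ 2 * B := by
        have h0 := norm_sub_le u (G z)
        have h1 := hbdG zstar
        have h2 := hbdG z
        simp only [u] at *
        linarith
      exact mul_le_mul_of_nonneg_left h3 hT0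
    rw [e1]
    exact mul_le_mul (hlipDG z z') e2 (norm_nonneg _) (by positivity)
  have b2 : ‖(ContinuousLinearMap.adjoint (DG z')) (T (G z' - G z))‖ ≤
      κ * (‖T‖ * (κ * ‖z - z'‖)) := by
    refine (ContinuousLinearMap.le_opNorm _ _).trans ?_
    have e1 : ‖ContinuousLinearMap.adjoint (DG z')‖ = ‖DG z'‖ :=
      LinearIsometryEquiv.norm_map _ _
    have e2 : ‖T (G z' - G z)‖ ≤ ‖T‖ * (κ * ‖z - z'‖) := by
      refine (ContinuousLinearMap.le_opNorm _ _).trans ?_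
      refine mul_le_mul_of_nonneg_left ?_ hT0
      have h4 := hlipG z' z
      rwa [norm_sub_rev z' z] at h4
    rw [e1]
    exact mul_le_mul (hDG z') e2 (norm_nonneg _) hκ.le
  rw [← smul_sub, norm_smul, key]
  have h5 := (norm_add_le ((ContinuousLinearMap.adjoint (DG z) -
      ContinuousLinearMap.adjoint (DG z')) (T (u - G z)))
      ((ContinuousLinearMap.adjoint (DG z')) (T (G z' - G z)))).trans (add_le_add b1 b2)
  have h6 : ‖(-2:ℝ)‖ = 2 := by norm_num
  rw [h6]
  have h7 : 2 * ((M * ‖z - z'‖) * (‖T‖ * (2 * B)) + κ * (‖T‖ * (κ * ‖z - z'‖))) =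
      2 * (2 * M * B + κ ^ 2) * ‖T‖ * ‖z - z'‖ := by ring
  linarith
end

section
/- Let G : ℝ^d → ℝ^n be differentiable with derivative DG, let A : ℝ^n → ℝ^m be a linear map, let z* ∈ ℝ^d, and define F(z) = ‖A G(z*) − A G(z)‖². Suppose: (i) G is (α, γ)-strongly smooth, i.e. ⟨G(z) − G(z'), DG(z)(z − z')⟩ ≥ α‖z − z'‖² − γ for all z, z'; (ii) ‖G(z) − G(z')‖ ≤ κ‖z − z'‖ for all z, z' and ‖DG(z)‖ ≤ κ for all z; and (iii) ‖I − AᵀA‖ ≤ δ in operator norm, where I is the identity on ℝ^n. Then for every z ∈ ℝ^d, ⟨z − z*, ∇F(z)⟩ ≥ 2(α − δκ²)‖z − z*‖² − 2γ; i.e., F is (2(α − δκ²), 2γ)-dissipative around z*. -/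
/-!
Writing `u = z - z*` and `B = A ∘ DG z`, the gradient of `F` at `z` is `2 B† (A G(z) - A G(z*))`,
so `⟪u, ∇F(z)⟫ = 2 ⟪A (DG z u), A (G z - G z*)⟫`. Since `A†A` is within `δ` of the identity,
this differs from `2 ⟪DG z u, G z - G z*⟫ ≥ 2 (α ‖u‖² - γ)` by at most
`2 δ ‖DG z u‖ ‖G z - G z*‖ ≤ 2 δ κ² ‖u‖²`.
-/

open scoped RealInnerProductSpace

section

variable {E F : Type*} [NormedAddCommGroup E] [InnerProductSpace ℝ E] [CompleteSpace E]
  [NormedAddCommGroup F] [InnerProductSpace ℝ F] [CompleteSpace F]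

theorem HasFDerivAt.hasGradientAt_norm_sq {f : E → F} {f' : E →L[ℝ] F} {x : E}
    (hf : HasFDerivAt f f' x) :
    HasGradientAt (‖f ·‖ ^ 2) ((2 : ℝ) • (ContinuousLinearMap.adjoint f') (f x)) x := by
  rw [hasGradientAt_iff_hasFDerivAt]
  refine hf.norm_sq.congr_fderiv ?_
  ext v
  simp [ContinuousLinearMap.adjoint_inner_left]

theorem ContinuousLinearMap.inner_sub_inner_map_map_le (A : E →L[ℝ] F) (x y : E) :
    ⟪x, y⟫ - ⟪A x, A y⟫ ≤
      ‖ContinuousLinearMap.id ℝ E - (ContinuousLinearMap.adjoint A).comp A‖ * ‖x‖ * ‖y‖ := by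
  set T := ContinuousLinearMap.id ℝ E - (ContinuousLinearMap.adjoint A).comp A
  have hT : ⟪x, T y⟫ = ⟪x, y⟫ - ⟪A x, A y⟫ := by
    simp [T, inner_sub_right, ContinuousLinearMap.adjoint_inner_right]
  calc ⟪x, y⟫ - ⟪A x, A y⟫ = ⟪x, T y⟫ := hT.symm
    _ ≤ ‖x‖ * ‖T y‖ := real_inner_le_norm x (T y)
    _ ≤ ‖x‖ * (‖T‖ * ‖y‖) := by gcongr; exact T.le_opNorm y
    _ = ‖T‖ * ‖x‖ * ‖y‖ := by ring

end

/-- Dissipativity of the compressed-sensing loss: if `G` is `(α, γ)`-strongly smooth,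
`κ`-Lipschitz with `‖DG‖ ≤ κ`, and `‖I − AᵀA‖ ≤ δ`, then
`F(z) = ‖A G(z*) − A G(z)‖²` is `(2(α − δκ²), 2γ)`-dissipative around `z*`. -/
theorem cs_loss_dissipative
    {d n m : ℕ}
    (G : EuclideanSpace ℝ (Fin d) → EuclideanSpace ℝ (Fin n))
    (DG : EuclideanSpace ℝ (Fin d) →
      (EuclideanSpace ℝ (Fin d) →L[ℝ] EuclideanSpace ℝ (Fin n)))
    (hdiff : ∀ z, HasFDerivAt G (DG z) z)
    (A : EuclideanSpace ℝ (Fin n) →L[ℝ] EuclideanSpace ℝ (Fin m))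
    (zstar : EuclideanSpace ℝ (Fin d))
    (α γ κ δ : ℝ)
    (hsmooth : ∀ z z' : EuclideanSpace ℝ (Fin d),
      ⟪G z - G z', DG z (z - z')⟫ ≥ α * ‖z - z'‖ ^ 2 - γ)
    (hlipG : ∀ z z' : EuclideanSpace ℝ (Fin d), ‖G z - G z'‖ ≤ κ * ‖z - z'‖)
    (hDG : ∀ z : EuclideanSpace ℝ (Fin d), ‖DG z‖ ≤ κ)
    (hA : ‖ContinuousLinearMap.id ℝ (EuclideanSpace ℝ (Fin n)) -
      (ContinuousLinearMap.adjoint A).comp A‖ ≤ δ)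
    (F : EuclideanSpace ℝ (Fin d) → ℝ)
    (hF : ∀ w, F w = ‖A (G zstar) - A (G w)‖ ^ 2) :
    ∀ z : EuclideanSpace ℝ (Fin d),
      ⟪z - zstar, gradient F z⟫ ≥
        2 * (α - δ * κ ^ 2) * ‖z - zstar‖ ^ 2 - 2 * γ := by
  intro z
  set u := z - zstar
  have hF' : F = fun w => ‖A (G w) - A (G zstar)‖ ^ 2 := funext fun w => by rw [hF, norm_sub_rev]
  have hgrad : HasGradientAt F
      ((2 : ℝ) • (ContinuousLinearMap.adjoint (A.comp (DG z))) (A (G z) - A (G zstar))) z := by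
    rw [hF']
    exact ((A.hasFDerivAt.comp z (hdiff z)).sub_const (A (G zstar))).hasGradientAt_norm_sq
  have hinner : ⟪u, gradient F z⟫ = 2 * ⟪A (DG z u), A (G z - G zstar)⟫ := by
    rw [hgrad.gradient, real_inner_smul_right, ContinuousLinearMap.adjoint_inner_right,
      ← map_sub A (G z)]
    rfl
  have hDGu : ‖DG z u‖ ≤ κ * ‖u‖ :=
    ((DG z).le_opNorm u).trans (mul_le_mul_of_nonneg_right (hDG z) (norm_nonneg u))
  have hδ : 0 ≤ δ := (norm_nonneg _).trans hA
  have hκu : 0 ≤ κ * ‖u‖ := (norm_nonneg _).trans hDGu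
  have hcross : ‖(ContinuousLinearMap.id ℝ _ - (ContinuousLinearMap.adjoint A).comp A)‖ *
      ‖DG z u‖ * ‖G z - G zstar‖ ≤ δ * κ ^ 2 * ‖u‖ ^ 2 := by
    calc _ ≤ δ * (κ * ‖u‖) * (κ * ‖u‖) :=
          mul_le_mul (mul_le_mul hA hDGu (norm_nonneg _) hδ) (hlipG z zstar) (norm_nonneg _)
            (mul_nonneg hδ hκu)
      _ = δ * κ ^ 2 * ‖u‖ ^ 2 := by ring
  have hinner_DG : α * ‖u‖ ^ 2 - γ ≤ ⟪DG z u, G z - G zstar⟫ := by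
    rw [real_inner_comm]; exact hsmooth z zstar
  have hnear_isometry := A.inner_sub_inner_map_map_le (DG z u) (G z - G zstar)
  rw [hinner]
  linarith
end

section
/- Let G : ℝ^d → ℝ^n be differentiable with derivative DG, let z* ∈ ℝ^d, and define F(z) = ‖G(z*) − G(z)‖². If G is (α, γ)-strongly smooth, i.e. ⟨G(z) − G(z'), DG(z)(z − z')⟩ ≥ α‖z − z'‖² − γ for all z, z', then for every z ∈ ℝ^d, ⟨z − z*, ∇F(z)⟩ ≥ 2α‖z − z*‖² − 2γ; i.e., the loss F with identity measurement map is (2α, 2γ)-dissipative around z*. -/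
open scoped RealInnerProductSpace

section

variable {E H : Type*} [NormedAddCommGroup E] [InnerProductSpace ℝ E] [CompleteSpace E]
  [NormedAddCommGroup H] [InnerProductSpace ℝ H]

def IsStronglySmooth (G : E → H) (DG : E → E →L[ℝ] H) (α γ : ℝ) : Prop :=
  ∀ z z', α * ‖z - z'‖ ^ 2 - γ ≤ ⟪G z - G z', DG z (z - z')⟫

def IsDissipativeAround (F : E → ℝ) (zstar : E) (a γ : ℝ) : Prop :=
  ∀ z, a * ‖z - zstar‖ ^ 2 - γ ≤ ⟪z - zstar, gradient F z⟫

theorem inner_gradient_norm_const_sub_sq {G : E → H} {G' : E →L[ℝ] H} {z : E}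
    (hG : HasFDerivAt G G' z) (c : H) (v : E) :
    ⟪v, gradient (fun w => ‖c - G w‖ ^ 2) z⟫ = 2 * ⟪G z - c, G' v⟫ := by
  have hderiv : HasFDerivAt (fun w => ‖c - G w‖ ^ 2)
      (2 • (innerSL ℝ (c - G z)).comp (-G')) z := by
    simpa using ((hasFDerivAt_const c z).sub hG).norm_sq
  rw [inner_gradient_right, hderiv.fderiv]
  simp only [smul_apply, ContinuousLinearMap.comp_apply,
    neg_apply, innerSL_apply_apply, inner_neg_right, ← inner_neg_left,
    neg_sub, nsmul_eq_mul, Nat.cast_ofNat, conj_trivial]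

theorem IsStronglySmooth.isDissipativeAround_norm_sub_sq {G : E → H} {DG : E → E →L[ℝ] H}
    {α γ : ℝ} (hG : IsStronglySmooth G DG α γ) (hdiff : ∀ z, HasFDerivAt G (DG z) z)
    (zstar : E) :
    IsDissipativeAround (fun w => ‖G zstar - G w‖ ^ 2) zstar (2 * α) (2 * γ) := by
  intro z
  rw [inner_gradient_norm_const_sub_sq (hdiff z)]
  linarith [hG z zstar]

end

/-- Dissipativity with identity measurement map: if `G` is `(α, γ)`-strongly smooth,
then `F(z) = ‖G(z*) − G(z)‖²` is `(2α, 2γ)`-dissipative around `z*`. -/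
theorem identity_loss_dissipative
    {d n : ℕ}
    (G : EuclideanSpace ℝ (Fin d) → EuclideanSpace ℝ (Fin n))
    (DG : EuclideanSpace ℝ (Fin d) →
      (EuclideanSpace ℝ (Fin d) →L[ℝ] EuclideanSpace ℝ (Fin n)))
    (hdiff : ∀ z, HasFDerivAt G (DG z) z)
    (zstar : EuclideanSpace ℝ (Fin d))
    (α γ : ℝ)
    (hsmooth : ∀ z z' : EuclideanSpace ℝ (Fin d),
      ⟪G z - G z', DG z (z - z')⟫ ≥ α * ‖z - z'‖ ^ 2 - γ)
    (F : EuclideanSpace ℝ (Fin d) → ℝ)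
    (hF : ∀ w, F w = ‖G zstar - G w‖ ^ 2) :
    ∀ z : EuclideanSpace ℝ (Fin d),
      ⟪z - zstar, gradient F z⟫ ≥ 2 * α * ‖z - zstar‖ ^ 2 - 2 * γ := by
  obtain rfl : F = fun w => ‖G zstar - G w‖ ^ 2 := funext hF
  exact IsStronglySmooth.isDissipativeAround_norm_sub_sq hsmooth hdiff zstar
end

section
/- Let D ⊆ ℝ^d be a convex set and let F : ℝ^d → ℝ be differentiable on D with ‖∇F(z) − ∇F(z')‖ ≤ L‖z − z'‖ and ‖∇F(z)‖ ≤ D₀ for all z, z' ∈ D. Let β, η > 0 and set r = √(10ηd/β). Then for all u, w ∈ D with ‖w − u‖ ≤ r, the Metropolis–Hastings log-acceptance exponent satisfies −β(F(w) − F(u) − ⟨w − u, (∇F(w) + ∇F(u))/2⟩) + (ηβ/4)(‖∇F(u)‖² − ‖∇F(w)‖²) ≥ −5Ldη − 5LD₀ d^{1/2} β^{1/2} η^{3/2}. -/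
open scoped RealInnerProductSpace

set_option maxHeartbeats 1000000 in
/-- Lower bound on the Metropolis–Hastings log-acceptance exponent for projected SGLD
with proposal radius `r = √(10ηd/β)`. -/
theorem mh_log_acceptance_exponent_bound
    {d : ℕ} (D : Set (EuclideanSpace ℝ (Fin d))) (hD : Convex ℝ D)
    (F : EuclideanSpace ℝ (Fin d) → ℝ)
    (g : EuclideanSpace ℝ (Fin d) → EuclideanSpace ℝ (Fin d))
    (L D₀ β η : ℝ) (hL : 0 ≤ L) (hD₀ : 0 ≤ D₀) (hβ : 0 < β) (hη : 0 < η)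
    (hdiff : ∀ z ∈ D, HasGradientWithinAt F (g z) D z)
    (hlip : ∀ z ∈ D, ∀ z' ∈ D, ‖g z - g z'‖ ≤ L * ‖z - z'‖)
    (hbd : ∀ z ∈ D, ‖g z‖ ≤ D₀)
    (r : ℝ) (hr : r = Real.sqrt (10 * η * d / β)) :
    ∀ u ∈ D, ∀ w ∈ D, ‖w - u‖ ≤ r →
      -β * (F w - F u - ⟪w - u, ((1 : ℝ) / 2) • (g w + g u)⟫) +
          η * β / 4 * (‖g u‖ ^ 2 - ‖g w‖ ^ 2) ≥
        -(5 * L * d * η) -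
          5 * L * D₀ * Real.sqrt d * Real.sqrt β * (η * Real.sqrt η) := by
  intro u hu w hw hwu
  have hr0 : 0 ≤ r := hr ▸ Real.sqrt_nonneg _
  have hr2 : r ^ 2 = 10 * η * d / β := by
    rw [hr, Real.sq_sqrt]; positivity
  set mid : EuclideanSpace ℝ (Fin d) := ((1 : ℝ) / 2) • (g w + g u) with hmid
  have hsD : segment ℝ u w ⊆ D := hD.segment_subset hu hw
  -- trapezoid bound
  have h1 : |F w - F u - ⟪w - u, mid⟫| ≤ L * r / 2 * r := by
    have key := Convex.norm_image_sub_le_of_norm_hasFDerivWithin_le'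
      (f := F) (f' := fun x => InnerProductSpace.toDual ℝ _ (g x))
      (φ := InnerProductSpace.toDual ℝ _ mid) (s := segment ℝ u w) (C := L * r / 2)
      (fun x hx => ((hdiff x (hsD hx)).hasFDerivWithinAt).mono hsD)
      ?_ (convex_segment u w) (left_mem_segment ℝ u w) (right_mem_segment ℝ u w)
    · have happ : (InnerProductSpace.toDual ℝ _ mid) (w - u) = ⟪w - u, mid⟫ := by
        rw [InnerProductSpace.toDual_apply_apply, real_inner_comm]
      rw [happ] at key
      refine le_trans key ?_
      exact mul_le_mul_of_nonneg_left hwu (by positivity)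
    · intro x hx
      rw [← map_sub, (InnerProductSpace.toDual ℝ _).norm_map]
      obtain ⟨a, b, ha, hb, hab, hx'⟩ := hx
      have hxD : x ∈ D := hsD ⟨a, b, ha, hb, hab, hx'⟩
      have hxu : ‖x - u‖ = b * ‖w - u‖ := by
        have : x - u = b • (w - u) := by
          rw [← hx']; rw [show a = 1 - b by linarith]; module
        rw [this, norm_smul, Real.norm_eq_abs, abs_of_nonneg hb]
      have hxw : ‖x - w‖ = a * ‖w - u‖ := by
        have : x - w = (-a) • (w - u) := by
          rw [← hx']; rw [show b = 1 - a by linarith]; module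
        rw [this, norm_smul, Real.norm_eq_abs, abs_neg, abs_of_nonneg ha]
      have hdecomp : g x - mid = ((1:ℝ)/2) • (g x - g u) + ((1:ℝ)/2) • (g x - g w) := by
        rw [hmid]; module
      have h1' : ‖g x - g u‖ ≤ L * (b * ‖w - u‖) := by
        have := hlip x hxD u hu; rwa [hxu] at this
      have h2' : ‖g x - g w‖ ≤ L * (a * ‖w - u‖) := by
        have := hlip x hxD w hw; rwa [hxw] at this
      have hwur : 0 ≤ ‖w - u‖ := norm_nonneg _
      calc ‖g x - mid‖ ≤ ‖((1:ℝ)/2) • (g x - g u)‖ + ‖((1:ℝ)/2) • (g x - g w)‖ := by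
            rw [hdecomp]; exact norm_add_le _ _
        _ = (1/2) * ‖g x - g u‖ + (1/2) * ‖g x - g w‖ := by
            simp [norm_smul]
        _ ≤ (1/2) * (L * (b * ‖w - u‖)) + (1/2) * (L * (a * ‖w - u‖)) := by
            gcongr
        _ = L / 2 * ‖w - u‖ := by rw [show b = 1 - a by linarith]; ring
        _ ≤ L * r / 2 := by nlinarith
  -- gradient norm square difference bound
  have h2 : ‖g u‖ ^ 2 - ‖g w‖ ^ 2 ≥ -(2 * D₀ * (L * r)) := by
    have hg : ‖g u - g w‖ ≤ L * r := by
      have := hlip u hu w hw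
      have h' : ‖u - w‖ = ‖w - u‖ := norm_sub_rev _ _
      nlinarith
    have hnu : ‖g u‖ ≤ D₀ := hbd u hu
    have hnw : ‖g w‖ ≤ D₀ := hbd w hw
    have htri : ‖g w‖ - ‖g u‖ ≤ ‖g u - g w‖ := by
      have := norm_sub_norm_le (g w) (g u)
      have h' : ‖g w - g u‖ = ‖g u - g w‖ := norm_sub_rev _ _
      linarith
    have hsum : ‖g u‖ + ‖g w‖ ≤ 2 * D₀ := by linarith
    have hkey := mul_le_mul (le_trans htri hg) hsum
      (by positivity) (by positivity)
    nlinarith [norm_nonneg (g u), norm_nonneg (g w)]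
  -- sqrt arithmetic
  have hβr : β * r = Real.sqrt 10 * Real.sqrt η * Real.sqrt d * Real.sqrt β := by
    have h1 : 0 ≤ β * r := by positivity
    have h2 : 0 ≤ Real.sqrt 10 * Real.sqrt η * Real.sqrt d * Real.sqrt β := by positivity
    have hsq : (β * r) ^ 2 = (Real.sqrt 10 * Real.sqrt η * Real.sqrt d * Real.sqrt β) ^ 2 := by
      rw [mul_pow, hr2, mul_pow, mul_pow, mul_pow,
        Real.sq_sqrt (by norm_num : (0:ℝ) ≤ 10), Real.sq_sqrt hη.le,
        Real.sq_sqrt (Nat.cast_nonneg d), Real.sq_sqrt hβ.le]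
      field_simp
    calc β * r = Real.sqrt ((β * r) ^ 2) := (Real.sqrt_sq h1).symm
      _ = Real.sqrt ((Real.sqrt 10 * Real.sqrt η * Real.sqrt d * Real.sqrt β) ^ 2) := by rw [hsq]
      _ = _ := Real.sqrt_sq h2
  have h10 : Real.sqrt 10 ≤ 10 := by
    nlinarith [Real.sq_sqrt (by norm_num : (10:ℝ) ≥ 0), Real.sqrt_nonneg 10]
  -- finish
  have hA1 : -β * (F w - F u - ⟪w - u, mid⟫) ≥ -(5 * L * d * η) := by
    have habs : F w - F u - ⟪w - u, mid⟫ ≤ L * r / 2 * r := (abs_le.mp h1).2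
    have hb2 : β * r ^ 2 = 10 * η * d := by
      rw [hr2]; field_simp
    have heq : β * (L * r / 2 * r) = 5 * L * d * η := by
      linear_combination (L / 2) * hb2
    have hmul := mul_le_mul_of_nonneg_left habs hβ.le
    linarith
  have hA2 : η * β / 4 * (‖g u‖ ^ 2 - ‖g w‖ ^ 2) ≥
      -(5 * L * D₀ * Real.sqrt d * Real.sqrt β * (η * Real.sqrt η)) := by
    have step : η * β / 4 * (‖g u‖ ^ 2 - ‖g w‖ ^ 2) ≥ -(η / 2 * D₀ * L * (β * r)) := by
      have h2' : -(2 * D₀ * (L * r)) ≤ ‖g u‖ ^ 2 - ‖g w‖ ^ 2 := h2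
      have hmul := mul_le_mul_of_nonneg_left h2' (show (0:ℝ) ≤ η * β / 4 by positivity)
      have heq : η * β / 4 * -(2 * D₀ * (L * r)) = -(η / 2 * D₀ * L * (β * r)) := by ring
      linarith
    rw [hβr] at step
    refine le_trans ?_ step
    have hs10 : 0 ≤ Real.sqrt 10 := Real.sqrt_nonneg _
    have h' : 0 ≤ L * D₀ * Real.sqrt d * Real.sqrt β * (η * Real.sqrt η) := by positivity
    have hm := mul_le_mul_of_nonneg_right h10 h'
    nlinarith [hm, h']
  linarith
end

section
/- Let R > 0, let D ⊆ ℝ^d be a measurable subset of the closed ball B(0, R), let z* ∈ D, let β, L > 0, and let F : ℝ^d → ℝ be measurable with 0 ≤ F(z) ≤ (L/2)‖z − z*‖² for all z ∈ D. Let Λ = ∫_D exp(−β F(z)) dz (finite and positive), let π be the Gibbs probability measure on ℝ^d with density p(z) = exp(−β F(z))·1_D(z)/Λ, and assume F is π-integrable and h(p) = −∫ p log p is well defined. Then ∫ F dπ ≤ (1/β)·[ (d/2)·log(2πe R²/d) − log ∫_D exp(−(βL/2)‖z − z*‖²) dz ]. -/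
/-!
With `p = e^{-βF} / Λ` on `D`, Gibbs' inequality `∫ p log (q / p) ≤ ∫ q - ∫ p ≤ 0` against any
sub-probability density `q` gives `β ∫ F p + log Λ = -∫ p log p ≤ -∫ p log q`. For the isotropic
Gaussian `q ∝ exp (-a ‖z‖²)` and `‖z‖ ≤ R` on `D` the right-hand side is at most
`(d/2) log (π/a) + a R²`, which is minimised at `a = d / (2 R²)` with value `(d/2) log (2πe R²/d)`.
Finally `F ≤ (L/2) ‖z - z*‖²` on `D` bounds `Λ` below by `∫_D exp (-(βL/2) ‖z - z*‖²)`.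
-/

open MeasureTheory Real

section Gaussian

variable {V : Type*} [NormedAddCommGroup V] [InnerProductSpace ℝ V]

variable (V) in
noncomputable def isotropicGaussianDensity (a : ℝ) (v : V) : ℝ :=
  (a / π) ^ (Module.finrank ℝ V / 2 : ℝ) * exp (-a * ‖v‖ ^ 2)

theorem isotropicGaussianDensity_pos {a : ℝ} (ha : 0 < a) (v : V) :
    0 < isotropicGaussianDensity V a v := by
  unfold isotropicGaussianDensity; positivity

theorem neg_log_isotropicGaussianDensity {a : ℝ} (ha : 0 < a) (v : V) :
    -log (isotropicGaussianDensity V a v) =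
      Module.finrank ℝ V / 2 * log (π / a) + a * ‖v‖ ^ 2 := by
  rw [isotropicGaussianDensity, log_mul (by positivity) (exp_ne_zero _), log_exp,
    log_rpow (by positivity), ← inv_div a, log_inv]
  ring

variable [FiniteDimensional ℝ V] [MeasurableSpace V] [BorelSpace V]

theorem integral_isotropicGaussianDensity {a : ℝ} (ha : 0 < a) :
    ∫ v, isotropicGaussianDensity V a v = 1 := by
  simp only [isotropicGaussianDensity]
  rw [integral_const_mul, GaussianFourier.integral_rexp_neg_mul_sq_norm ha,
    ← mul_rpow (by positivity) (by positivity), div_mul_div_comm, mul_comm a,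
    div_self (by positivity), one_rpow]

theorem integrable_isotropicGaussianDensity {a : ℝ} (ha : 0 < a) :
    Integrable (isotropicGaussianDensity V a) :=
  .of_integral_ne_zero (by rw [integral_isotropicGaussianDensity ha]; exact one_ne_zero)

end Gaussian

theorem le_half_mul_log_of_forall_pos (n : ℕ) {R X : ℝ} (hR : 0 < R)
    (h : ∀ a > 0, X ≤ n / 2 * log (π / a) + a * R ^ 2) :
    X ≤ n / 2 * log (2 * π * exp 1 * R ^ 2 / n) := by
  -- for `n = 0` the infimum `0` over `a` is only approached as `a → 0`
  rcases n.eq_zero_or_pos with rfl | hn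
  · refine le_of_forall_pos_le_add fun ε hε => ?_
    have := h (ε / R ^ 2) (by positivity)
    simp only [CharP.cast_eq_zero, zero_div, zero_mul, zero_add] at this ⊢
    rwa [div_mul_cancel₀ _ (by positivity)] at this
  · have hn' : (0 : ℝ) < n := Nat.cast_pos.2 hn
    convert h (n / (2 * R ^ 2)) (by positivity) using 1
    have : 2 * π * exp 1 * R ^ 2 / n = exp 1 * (π / (n / (2 * R ^ 2))) := by
      field_simp
    rw [this, log_mul (exp_ne_zero _) (by positivity), log_exp]
    field_simp
    ring

theorem gibbs_variational_bound {α : Type*} [MeasurableSpace α] {μ : Measure α} {D : Set α}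
    (hD : MeasurableSet D) {β Λ K : ℝ} {f p q : α → ℝ}
    (hΛ : Λ = ∫ z in D, exp (-β * f z) ∂μ) (hΛpos : 0 < Λ)
    (hpD : ∀ z ∈ D, p z = exp (-β * f z) / Λ) (hfp : IntegrableOn (fun z => f z * p z) D μ)
    (hq_int : IntegrableOn q D μ) (hq_le : ∫ z in D, q z ∂μ ≤ 1) (hq_pos : ∀ z ∈ D, 0 < q z)
    (hqK : ∀ z ∈ D, -log (q z) ≤ K) :
    β * ∫ z in D, f z * p z ∂μ ≤ K - log Λ := by
  have hexp_int : IntegrableOn (fun z => exp (-β * f z)) D μ :=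
    .of_integral_ne_zero (hΛ ▸ hΛpos.ne')
  have hp_int : IntegrableOn p D μ :=
    IntegrableOn.congr_fun (hexp_int.div_const Λ) (fun z hz => (hpD z hz).symm) hD
  have hp_one : ∫ z in D, p z ∂μ = 1 := by
    rw [setIntegral_congr_fun hD hpD, integral_div, ← hΛ, div_self hΛpos.ne']
  have hrhs_int : IntegrableOn (fun z => (K - log Λ) * p z - p z) D μ :=
    (hp_int.const_mul _).sub hp_int
  have hpt : ∀ z ∈ D, β * (f z * p z) ≤ (K - log Λ) * p z - p z + q z := by
    intro z hz
    have hp_pos : 0 < p z := by rw [hpD z hz]; positivity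
    have hlogp : log (p z) = -β * f z - log Λ := by
      rw [hpD z hz, log_div (exp_ne_zero _) hΛpos.ne', log_exp]
    have hlog_ratio : p z * log (q z / p z) ≤ q z - p z := calc
      _ ≤ p z * (q z / p z - 1) :=
        mul_le_mul_of_nonneg_left (log_le_sub_one_of_pos (div_pos (hq_pos z hz) hp_pos))
          hp_pos.le
      _ = q z - p z := by field_simp
    rw [log_div (hq_pos z hz).ne' hp_pos.ne', hlogp] at hlog_ratio
    nlinarith [mul_le_mul_of_nonneg_left (hqK z hz) hp_pos.le]
  calc β * ∫ z in D, f z * p z ∂μ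
      = ∫ z in D, β * (f z * p z) ∂μ := (integral_const_mul _ _).symm
    _ ≤ ∫ z in D, ((K - log Λ) * p z - p z + q z) ∂μ :=
      setIntegral_mono_on (hfp.const_mul β) (hrhs_int.add hq_int) hD hpt
    _ = K - log Λ - 1 + ∫ z in D, q z ∂μ := by
      rw [integral_add hrhs_int hq_int,
        integral_sub (hp_int.const_mul _) hp_int, integral_const_mul, hp_one, mul_one]
    _ ≤ K - log Λ := by linarith

theorem log_setIntegral_exp_mono {α : Type*} [MeasurableSpace α] {μ : Measure α} {D : Set α}
    (hD : MeasurableSet D) (hμD : μ D ≠ 0) {f g : α → ℝ}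
    (hf : IntegrableOn (fun z => exp (f z)) D μ) (hg : IntegrableOn (fun z => exp (g z)) D μ)
    (hfg : ∀ z ∈ D, f z ≤ g z) :
    log (∫ z in D, exp (f z) ∂μ) ≤ log (∫ z in D, exp (g z) ∂μ) :=
  have : NeZero (μ.restrict D) := ⟨by rwa [Ne, Measure.restrict_eq_zero]⟩
  log_le_log (integral_exp_pos hf) <|
    setIntegral_mono_on hf hg hD fun z hz => exp_le_exp.2 (hfg z hz)

theorem gibbs_neg_entropy_le_of_subset_closedBall {d : ℕ} {R : ℝ} (hR : 0 < R)
    {D : Set (EuclideanSpace ℝ (Fin d))} (hD : MeasurableSet D)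
    (hDball : D ⊆ Metric.closedBall 0 R) {β Λ : ℝ} {F p : EuclideanSpace ℝ (Fin d) → ℝ}
    (hΛ : Λ = ∫ z in D, exp (-β * F z)) (hΛpos : 0 < Λ)
    (hpD : ∀ z ∈ D, p z = exp (-β * F z) / Λ) (hFint : IntegrableOn (fun z => F z * p z) D) :
    β * (∫ z in D, F z * p z) + log Λ ≤ (d : ℝ) / 2 * log (2 * π * exp 1 * R ^ 2 / d) := by
  refine le_half_mul_log_of_forall_pos d hR fun a ha => ?_
  have hq := integrable_isotropicGaussianDensity (V := EuclideanSpace ℝ (Fin d)) ha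
  have hq_le : ∫ z in D, isotropicGaussianDensity _ a z ≤ 1 :=
    (setIntegral_le_integral hq (.of_forall fun z => (isotropicGaussianDensity_pos ha z).le)
      ).trans_eq (integral_isotropicGaussianDensity ha)
  have hqK : ∀ z ∈ D,
      -log (isotropicGaussianDensity _ a z) ≤ d / 2 * log (π / a) + a * R ^ 2 := by
    intro z hz
    rw [neg_log_isotropicGaussianDensity ha, finrank_euclideanSpace_fin]
    have : ‖z‖ ≤ R := by simpa using hDball hz
    gcongr
  have := gibbs_variational_bound hD hΛ hΛpos hpD hFint hq.integrableOn hq_le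
    (fun z _ => isotropicGaussianDensity_pos ha z) hqK
  linarith

theorem gibbs_expected_loss_bound_general
    {d : ℕ} (R : ℝ) (hR : 0 < R)
    (D : Set (EuclideanSpace ℝ (Fin d))) (hD : MeasurableSet D)
    (hDball : D ⊆ Metric.closedBall 0 R)
    (zstar : EuclideanSpace ℝ (Fin d))
    (β L : ℝ) (hβ : 0 < β)
    (F : EuclideanSpace ℝ (Fin d) → ℝ)
    (hF : ∀ z ∈ D, 0 ≤ F z ∧ F z ≤ L / 2 * ‖z - zstar‖ ^ 2)
    (Λ : ℝ) (hΛ : Λ = ∫ z in D, Real.exp (-β * F z)) (hΛpos : 0 < Λ)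
    (p : EuclideanSpace ℝ (Fin d) → ℝ)
    (hp : ∀ z, p z =
      Real.exp (-β * F z) * D.indicator (fun _ => (1 : ℝ)) z / Λ)
    (hFint : IntegrableOn (fun z => F z * p z) D) :
    ∫ z in D, F z * p z ≤
      1 / β * ((d : ℝ) / 2 * Real.log (2 * Real.pi * Real.exp 1 * R ^ 2 / d) -
        Real.log (∫ z in D, Real.exp (-(β * L / 2) * ‖z - zstar‖ ^ 2))) := by
  have hpD : ∀ z ∈ D, p z = exp (-β * F z) / Λ := fun z hz => by
    rw [hp z, Set.indicator_of_mem hz, mul_one]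
  have hloss := gibbs_neg_entropy_le_of_subset_closedBall hR hD hDball hΛ hΛpos hpD hFint
  have hμD : volume D ≠ 0 := fun h => by
    rw [hΛ, Measure.restrict_eq_zero.2 h, integral_zero_measure] at hΛpos
    exact hΛpos.false
  have hlogΛ : log (∫ z in D, exp (-(β * L / 2) * ‖z - zstar‖ ^ 2)) ≤ log Λ := by
    rw [hΛ]
    refine log_setIntegral_exp_mono hD hμD ?_ (.of_integral_ne_zero (hΛ ▸ hΛpos.ne'))
      fun z hz => by nlinarith [(hF z hz).2]
    exact (ContinuousOn.integrableOn_compact (isCompact_closedBall 0 R) (by fun_prop)).mono_set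
      hDball
  rw [one_div, inv_mul_eq_div, le_div_iff₀' hβ]
  linarith

/-- Expected loss under the Gibbs measure supported on `D ⊆ B(0, R)`:
`∫ F dπ ≤ (1/β)[(d/2)log(2πeR²/d) − log ∫_D exp(−(βL/2)‖z − z*‖²)]`. -/
theorem gibbs_expected_loss_bound
    {d : ℕ} (R : ℝ) (hR : 0 < R)
    (D : Set (EuclideanSpace ℝ (Fin d))) (hD : MeasurableSet D)
    (hDball : D ⊆ Metric.closedBall 0 R)
    (zstar : EuclideanSpace ℝ (Fin d)) (hzstar : zstar ∈ D)
    (β L : ℝ) (hβ : 0 < β) (hL : 0 < L)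
    (F : EuclideanSpace ℝ (Fin d) → ℝ) (hFmeas : Measurable F)
    (hF : ∀ z ∈ D, 0 ≤ F z ∧ F z ≤ L / 2 * ‖z - zstar‖ ^ 2)
    (Λ : ℝ) (hΛ : Λ = ∫ z in D, Real.exp (-β * F z)) (hΛpos : 0 < Λ)
    (p : EuclideanSpace ℝ (Fin d) → ℝ)
    (hp : ∀ z, p z =
      Real.exp (-β * F z) * D.indicator (fun _ => (1 : ℝ)) z / Λ)
    (hFint : IntegrableOn (fun z => F z * p z) D)
    (hent : IntegrableOn (fun z => p z * Real.log (p z)) D) :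
    ∫ z in D, F z * p z ≤
      1 / β * ((d : ℝ) / 2 * Real.log (2 * Real.pi * Real.exp 1 * R ^ 2 / d) -
        Real.log (∫ z in D, Real.exp (-(β * L / 2) * ‖z - zstar‖ ^ 2))) :=
  gibbs_expected_loss_bound_general R hR D hD hDball zstar β L hβ F hF Λ hΛ hΛpos p hp hFint
end
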